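/- Let G be a 2-node-connected MAP instance with no {0,1}-edge-pairs, let {v,w} be a bad-pair of G, and let C be a bp-component of {v,w}. Then both C^{v,w} and C^⊘ are 2-node-connected. -/

import Mathlib

set_option autoImplicit false

/-!  A formal framework for the Matching Augmentation Problem (MAP):
loopless multigraphs with edge costs in `{0,1}` (given by the predicate
`isZero` marking the zero-edges). -/

/-- A finite loopless multigraph together with `{0,1}` edge costs:
`isZero e` means that the edge `e` has cost zero (otherwise it is a unit-edge). -/
structure CostGraph where
  V : Type
  E : Type
  finV : Finite V
  finE : Finite E
  ends : E → Sym2 V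
  loopless : ∀ e, ¬ (ends e).IsDiag
  isZero : E → Prop

namespace CostGraph

variable (G : CostGraph)

/-- `x` and `y` are joined by an edge of `F` and both lie in the node set `S`. -/
def Adj (S : Set G.V) (F : Set G.E) (x y : G.V) : Prop :=
  x ∈ S ∧ y ∈ S ∧ ∃ e ∈ F, G.ends e = s(x, y)

/-- Reachability in the sub-multigraph with node set `S` and edge set `F`. -/
def Reachable (S : Set G.V) (F : Set G.E) (x y : G.V) : Prop :=
  Relation.ReflTransGen (G.Adj S F) x y

/-- The sub-multigraph with node set `S` and those edges of `F` having both
end nodes in `S` is connected (in particular `S` is nonempty). -/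
def ConnectedOn (S : Set G.V) (F : Set G.E) : Prop :=
  S.Nonempty ∧ ∀ x ∈ S, ∀ y ∈ S, G.Reachable S F x y

/-- The sub-multigraph with node set `S` and edge set `F` is 2-edge-connected:
it has at least two nodes and removing any one edge leaves it connected. -/
def TwoECOn (S : Set G.V) (F : Set G.E) : Prop :=
  1 < S.ncard ∧ G.ConnectedOn S F ∧ ∀ e : G.E, G.ConnectedOn S (F \ {e})

/-- `F` is the edge set of a 2-edge-connected spanning subgraph (2-ECSS) of `G`. -/
def TwoEC (F : Set G.E) : Prop := G.TwoECOn Set.univ F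

/-- The cost of a set of edges: the number of unit-edges in it. -/
noncomputable def cost (F : Set G.E) : ℕ := {e ∈ F | ¬ G.isZero e}.ncard

/-- `opt G` is the minimum cost of a 2-ECSS of `G`. -/
noncomputable def opt : ℕ := sInf (G.cost '' {F | G.TwoEC F})

/-- `F` is a 2-edge cover: every node is incident to at least two edges of `F`. -/
def TwoEdgeCover (F : Set G.E) : Prop :=
  ∀ v : G.V, 2 ≤ {e ∈ F | v ∈ G.ends e}.ncard

/-- `tau G` is the minimum cost of a 2-edge cover of `G`. -/
noncomputable def tau : ℕ := sInf (G.cost '' {F | G.TwoEdgeCover F})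

/-- The zero-edges form a matching: no two distinct zero-edges share an end node. -/
def ZeroMatching : Prop :=
  ∀ e f : G.E, G.isZero e → G.isZero f → e ≠ f → ∀ x : G.V, x ∈ G.ends e → x ∉ G.ends f

/-- A MAP instance: a (finite, loopless) multigraph with `{0,1}` edge costs whose
zero-edges form a matching and which is 2-edge-connected. -/
def IsMAP : Prop := G.ZeroMatching ∧ G.TwoEC Set.univ

/-- The degree of a node: the number of edges incident to it. -/
noncomputable def degree (v : G.V) : ℕ := {e : G.E | v ∈ G.ends e}.ncard

/-- `e, f` form a `{0,1}`-edge-pair: parallel edges, `e` of cost zero, `f` of cost one. -/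
def IsZeroOnePair (e f : G.E) : Prop :=
  e ≠ f ∧ G.ends e = G.ends f ∧ G.isZero e ∧ ¬ G.isZero f

/-- `G` has no `{0,1}`-edge-pairs. -/
def NoZeroOnePair : Prop := ∀ e f, ¬ G.IsZeroOnePair e f

/-- `v` is a cut node: deleting `v` leaves a disconnected (or empty) graph. -/
def IsCutNode (v : G.V) : Prop := ¬ G.ConnectedOn ({v}ᶜ) Set.univ

/-- `{v, w}` is a bad-pair: `vw` is a zero-edge and deleting both `v` and `w`
disconnects the graph. -/
def IsBadPair (v w : G.V) : Prop :=
  (∃ e, G.isZero e ∧ G.ends e = s(v, w)) ∧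
    ¬ G.ConnectedOn (({v, w} : Set G.V)ᶜ) Set.univ

/-- The number of bad-pairs of `G` (counted as unordered pairs). -/
noncomputable def badPairCount : ℕ :=
  {z : Sym2 G.V | ∃ a b, z = s(a, b) ∧ G.IsBadPair a b}.ncard

/-- `C` is (the node set of) a connected component of the sub-multigraph with node
set `S` and edge set `F`. -/
def IsCompOf (S : Set G.V) (F : Set G.E) (C : Set G.V) : Prop :=
  C ⊆ S ∧ C.Nonempty ∧ G.ConnectedOn C F ∧
    ∀ x ∈ C, ∀ y ∈ S, G.Adj S F x y → y ∈ C

/-- `Q` is the node set of a redundant 4-cycle: a 4-cycle `u₁u₂u₃u₄` with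
`V(C) ≠ V(G)`, two non-adjacent edges of cost zero and two non-adjacent nodes
of degree two in `G`. -/
def IsRed4CycleOn (Q : Set G.V) : Prop :=
  ∃ (u₁ u₂ u₃ u₄ : G.V) (e₁ e₂ e₃ e₄ : G.E),
    Q = {u₁, u₂, u₃, u₄} ∧
    u₁ ≠ u₂ ∧ u₁ ≠ u₃ ∧ u₁ ≠ u₄ ∧ u₂ ≠ u₃ ∧ u₂ ≠ u₄ ∧ u₃ ≠ u₄ ∧
    e₁ ≠ e₂ ∧ e₁ ≠ e₃ ∧ e₁ ≠ e₄ ∧ e₂ ≠ e₃ ∧ e₂ ≠ e₄ ∧ e₃ ≠ e₄ ∧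
    G.ends e₁ = s(u₁, u₂) ∧ G.ends e₂ = s(u₂, u₃) ∧
    G.ends e₃ = s(u₃, u₄) ∧ G.ends e₄ = s(u₄, u₁) ∧
    G.isZero e₁ ∧ G.isZero e₃ ∧
    G.degree u₂ = 2 ∧ G.degree u₄ = 2 ∧
    Q ≠ Set.univ

/-- A well-structured MAP instance: no `{0,1}`-edge-pairs, no redundant 4-cycles,
no cut nodes and no bad-pairs. -/
def WellStructured : Prop :=
  G.IsMAP ∧ G.NoZeroOnePair ∧ (∀ Q, ¬ G.IsRed4CycleOn Q) ∧
    (∀ v, ¬ G.IsCutNode v) ∧ (∀ v w, ¬ G.IsBadPair v w)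

/-- `G` is 2-node-connected: more than two nodes and deleting any one node
leaves a connected graph. -/
def TwoNC : Prop :=
  2 < Nat.card G.V ∧ ∀ v : G.V, G.ConnectedOn ({v}ᶜ) Set.univ

/-- Bridge of the sub-multigraph with node set `S` and edge set `F`: an edge of `F`
inside `S` whose removal disconnects its end nodes. -/
def IsBridgeOn (S : Set G.V) (F : Set G.E) (e : G.E) : Prop :=
  e ∈ F ∧ (∀ x ∈ G.ends e, x ∈ S) ∧
    ∀ x y, G.ends e = s(x, y) → ¬ G.Reachable S (F \ {e}) x y

/-- Bridge of the spanning subgraph `(V, F)`. -/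
def IsBridge (F : Set G.E) (e : G.E) : Prop := G.IsBridgeOn Set.univ F e

/-- `B` is (the node set of) a 2ec-block of the spanning subgraph `(V, F)`:
a maximal connected bridgeless subgraph with at least two nodes, equivalently a
connected component with at least two nodes of the graph obtained by deleting
all bridges. -/
def IsTwoECBlock (F : Set G.E) (B : Set G.V) : Prop :=
  G.IsCompOf Set.univ (F \ {e | G.IsBridge F e}) B ∧ 2 ≤ B.ncard

/-- Delete a set `D` of edges. -/
noncomputable def deleteEdges (D : Set G.E) : CostGraph where
  V := G.V
  E := {e : G.E // e ∉ D}
  finV := G.finV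
  finE := by haveI := G.finE; exact Subtype.finite
  ends e := G.ends e.1
  loopless e := G.loopless e.1
  isZero e := G.isZero e.1

/-- The sub-instance induced on a set `S` of nodes. -/
noncomputable def induce (S : Set G.V) : CostGraph where
  V := ↥S
  E := {e : G.E // ∀ x ∈ G.ends e, x ∈ S}
  finV := by haveI := G.finV; exact Subtype.finite
  finE := by haveI := G.finE; exact Subtype.finite
  ends e := (G.ends e.1).pmap Subtype.mk e.2
  loopless e := by
    intro hd
    exact G.loopless e.1
      (by simpa [Sym2.pmap_subtype_map_subtypeVal] using hd.map (f := Subtype.val))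
  isZero e := G.isZero e.1

/-- Contraction of `G` along (the equivalence generated by) a relation `R`:
node classes are identified, and edges joining identified nodes are removed
(no loops are created). -/
noncomputable def contract (R : G.V → G.V → Prop) : CostGraph where
  V := Quotient (Relation.EqvGen.setoid R)
  E := {e : G.E // ¬ (Sym2.map (Quotient.mk (Relation.EqvGen.setoid R)) (G.ends e)).IsDiag}
  finV := by haveI := G.finV; exact Quotient.finite _
  finE := by haveI := G.finE; exact Subtype.finite
  ends e := Sym2.map (Quotient.mk (Relation.EqvGen.setoid R)) (G.ends e.1)
  loopless e := e.2
  isZero e := G.isZero e.1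

/-- The relation identifying the nodes of each redundant 4-cycle. -/
def red4Rel (x y : G.V) : Prop := ∃ Q, G.IsRed4CycleOn Q ∧ x ∈ Q ∧ y ∈ Q

/-- The multigraph obtained from `G` by contracting all redundant 4-cycles. -/
noncomputable def contractRed4 : CostGraph := G.contract G.red4Rel

/-- For a bad-pair `{v,w}` and a bp-component `C`: the sub-instance `C^{v,w}`
induced on `V(C) ∪ {v, w}`. -/
noncomputable def bpUp (v w : G.V) (C : Set G.V) : CostGraph :=
  G.induce (C ∪ {v, w})

/-- For a bad-pair `{v,w}` and a bp-component `C`: the instance `C^⊘`, obtained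
from `C^{v,w}` by contracting the zero-edge `vw` if `C` has at least two nodes,
and equal to `C^{v,w}` if `C` has exactly one node. -/
noncomputable def bpContr (v w : G.V) (C : Set G.V) : CostGraph :=
  if 2 ≤ C.ncard then
    (G.bpUp v w C).contract (fun x y => x.1 = v ∧ y.1 = w)
  else G.bpUp v w C

/-- Every edge of `C^⊘` is an edge of `G`. -/
noncomputable def bpContrEdge (v w : G.V) (C : Set G.V) :
    (G.bpContr v w C).E → G.E := by
  unfold bpContr
  by_cases h : 2 ≤ C.ncard
  · rw [if_pos h]; exact fun e => e.1.1
  · rw [if_neg h]; exact fun e => e.1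

/-- The sub-multigraph `(S, F)` is 2-node-connected. -/
def TwoNCOn (S : Set G.V) (F : Set G.E) : Prop :=
  2 < S.ncard ∧ ∀ v : G.V, G.ConnectedOn (S \ {v}) F

/-- The sub-multigraph `(S, F)` consists of two nodes joined by two parallel edges. -/
def IsParallelPairBlock (S : Set G.V) (F : Set G.E) : Prop :=
  S.ncard = 2 ∧ ∃ e f, e ≠ f ∧ G.ends e = G.ends f ∧ F = {e, f}

/-- `(B i, F i)` (for `i : Fin k`) are the blocks of `G`: each block is 2-node-connected
or a pair of nodes joined by two parallel edges, the edge set of `G` is partitioned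
among the blocks, each `B i` is the set of end nodes of the edges of `F i`, and any
two blocks share at most one node. -/
def IsBlockDecomp {k : ℕ} (B : Fin k → Set G.V) (F : Fin k → Set G.E) : Prop :=
  (∀ i, ∀ e ∈ F i, ∀ x ∈ G.ends e, x ∈ B i) ∧
  (∀ i, B i = {x | ∃ e ∈ F i, x ∈ G.ends e}) ∧
  (Set.univ : Set G.E) = ⋃ i, F i ∧
  (∀ i j, i ≠ j → Disjoint (F i) (F j)) ∧
  (∀ i j, i ≠ j → (B i ∩ B j).ncard ≤ 1) ∧
  (∀ i, G.TwoNCOn (B i) (F i) ∨ G.IsParallelPairBlock (B i) (F i))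

end CostGraph

/-- `TauHatRel G t` holds when `t` is a value of `τ̂` for `G`, i.e. a value obtainable
by the following recursion: if `G` has no redundant 4-cycles and no cut nodes
(so it is well-structured provided it has no `{0,1}`-edge-pairs and no bad-pairs)
then `τ̂(G) = τ(G)`; otherwise contract all (`q`, say) redundant 4-cycles of `G`,
split the resulting graph at its cut nodes into its blocks `G₁, …, G_k`, and set
`τ̂(G) = 2q + τ̂(G₁) + … + τ̂(G_k)`. -/
inductive TauHatRel : CostGraph → ℕ → Prop where
  | base (G : CostGraph)
      (h4 : ∀ Q, ¬ G.IsRed4CycleOn Q) (hc : ∀ v, ¬ G.IsCutNode v) :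
      TauHatRel G G.tau
  | step (G : CostGraph) (k : ℕ)
      (B : Fin k → Set G.contractRed4.V) (F : Fin k → Set G.contractRed4.E)
      (t : Fin k → ℕ)
      (hobstr : (∃ Q, G.IsRed4CycleOn Q) ∨ (∃ v, G.IsCutNode v))
      (hdec : G.contractRed4.IsBlockDecomp B F)
      (ht : ∀ i, TauHatRel (G.contractRed4.induce (B i)) (t i)) :
      TauHatRel G (2 * {Q | G.IsRed4CycleOn Q}.ncard + ∑ i, t i)

namespace CostGraph

/-- `τ̂(G)`: the value associated to `G` by the recursion of `TauHatRel`. -/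
noncomputable def tauHat (G : CostGraph) : ℕ := sInf {t | TauHatRel G t}

open Classical in
/-- The lower bound `lb(G)`: `τ̂(G)` if `G` has no `{0,1}`-edge-pairs, no cut nodes
and no bad-pairs, and `opt(G)` otherwise. -/
noncomputable def lb (G : CostGraph) : ℕ :=
  if G.NoZeroOnePair ∧ (∀ v, ¬ G.IsCutNode v) ∧ (∀ v w, ¬ G.IsBadPair v w)
  then G.tauHat else G.opt

end CostGraph

/-! Removing a node `u` from `C^{v,w}` leaves a connected graph: in `G - u` every node of `C`
has a path to `{v, w}`, and the first node of that path outside `C` lies in `{v, w}` because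
`C` is a component of `G - {v, w}`; what remains of `{v, w}` is held together by the zero-edge
`vw`. Contracting `vw` preserves this: deleting the merged node leaves `C`, which is connected,
and deleting a node of `C` leaves the image of a connected subgraph of `C^{v,w}`. -/

namespace CostGraph

variable {G : CostGraph} {S A : Set G.V} {F : Set G.E} {x y : G.V}

instance (S : Set G.V) (F : Set G.E) : Std.Symm (G.Adj S F) where
  symm _ _ := fun ⟨hx, hy, e, he, hends⟩ => ⟨hy, hx, e, he, hends.trans Sym2.eq_swap⟩

lemma Reachable.symm (h : G.Reachable S F x y) : G.Reachable S F y x :=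
  Std.Symm.symm (r := Relation.ReflTransGen (G.Adj S F)) _ _ h

lemma Reachable.trans {z : G.V} (hxy : G.Reachable S F x y) (hyz : G.Reachable S F y z) :
    G.Reachable S F x z :=
  Relation.ReflTransGen.trans hxy hyz

lemma connectedOn_of_forall_reachable {a : G.V} (ha : a ∈ A)
    (h : ∀ x ∈ A, G.Reachable A F x a) : G.ConnectedOn A F :=
  ⟨⟨a, ha⟩, fun x hx y hy => (h x hx).trans (h y hy).symm⟩

lemma ne_of_ends_eq {e : G.E} {v w : G.V} (he : G.ends e = s(v, w)) : v ≠ w := by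
  rintro rfl
  exact G.loopless e (he ▸ Sym2.mk_isDiag_iff.mpr rfl)

lemma IsCompOf.exists_reachable_mem {T C U : Set G.V} (hC : G.IsCompOf Tᶜ Set.univ C)
    {a : G.V} (ha : a ∈ T) (hx : x ∈ C) (h : G.Reachable U Set.univ x a) :
    ∃ b ∈ T ∩ U, G.Reachable ((C ∪ T) ∩ U) Set.univ x b := by
  induction h using Relation.ReflTransGen.head_induction_on with
  | refl => exact absurd ha (hC.1 hx)
  | head hadj _ ih =>
    rename_i p q _
    obtain ⟨hpU, hqU, e, -, hends⟩ := hadj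
    by_cases hqT : q ∈ T
    · exact ⟨q, ⟨hqT, hqU⟩, .single ⟨⟨.inl hx, hpU⟩, ⟨.inr hqT, hqU⟩, e, trivial, hends⟩⟩
    · have hqC : q ∈ C := hC.2.2.2 p hx q hqT ⟨hC.1 hx, hqT, e, trivial, hends⟩
      obtain ⟨b, hb, hqb⟩ := ih hqC
      exact ⟨b, hb, hqb.head ⟨⟨.inl hx, hpU⟩, ⟨.inl hqC, hqU⟩, e, trivial, hends⟩⟩

lemma IsCompOf.connectedOn_union_pair_diff {v w u : G.V} {C : Set G.V} {e : G.E}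
    (hC : G.IsCompOf ({v, w} : Set G.V)ᶜ Set.univ C) (he : G.ends e = s(v, w))
    (hu : G.ConnectedOn {u}ᶜ Set.univ) :
    G.ConnectedOn ((C ∪ {v, w}) \ {u}) Set.univ := by
  have hvw := G.ne_of_ends_eq he
  obtain ⟨a, haT, hau⟩ : ∃ a ∈ ({v, w} : Set G.V), a ≠ u := by
    rcases eq_or_ne v u with rfl | hvu
    exacts [⟨w, .inr rfl, hvw.symm⟩, ⟨v, .inl rfl, hvu⟩]
  have hpair : ∀ b ∈ ({v, w} : Set G.V), b ≠ u →
      G.Reachable ((C ∪ {v, w}) \ {u}) Set.univ b a := by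
    intro b hbT hbu
    rcases eq_or_ne b a with rfl | hba
    · exact .refl
    · refine .single ⟨⟨.inr hbT, hbu⟩, ⟨.inr haT, hau⟩, e, trivial, ?_⟩
      rcases hbT with rfl | rfl <;> rcases haT with rfl | rfl
      exacts [absurd rfl hba, he, he.trans Sym2.eq_swap, absurd rfl hba]
  refine connectedOn_of_forall_reachable ⟨.inr haT, hau⟩ ?_
  rintro x ⟨hxC | hxT, hxu⟩
  · obtain ⟨b, ⟨hbT, hbu⟩, hxb⟩ :=
      hC.exists_reachable_mem haT hxC (hu.2 x hxu a hau)
    exact hxb.trans (hpair b hbT hbu)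
  · exact hpair x hxT hxu

lemma Reachable.induce (hAS : A ⊆ S) (hx : x ∈ A) (hy : y ∈ A)
    (h : G.Reachable A Set.univ x y) :
    (G.induce S).Reachable (Subtype.val ⁻¹' A) Set.univ ⟨x, hAS hx⟩ ⟨y, hAS hy⟩ := by
  induction h using Relation.ReflTransGen.head_induction_on with
  | refl => exact .refl
  | head hadj _ ih =>
    obtain ⟨hp, hq, e, -, hends⟩ := hadj
    have heS : ∀ z ∈ G.ends e, z ∈ S := fun z hz => by
      rw [hends, Sym2.mem_iff] at hz
      rcases hz with rfl | rfl
      exacts [hAS hp, hAS hq]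
    refine (ih hq).head ⟨hp, hq, ⟨e, heS⟩, trivial, ?_⟩
    apply Sym2.map.injective Subtype.val_injective
    change Sym2.map Subtype.val (Sym2.pmap Subtype.mk (G.ends e) heS) = _
    rw [Sym2.pmap_subtype_map_subtypeVal, hends]
    rfl

lemma ConnectedOn.induce (hAS : A ⊆ S) (h : G.ConnectedOn A Set.univ) :
    (G.induce S).ConnectedOn (Subtype.val ⁻¹' A) Set.univ := by
  obtain ⟨⟨a, ha⟩, hreach⟩ := h
  refine ⟨⟨⟨a, hAS ha⟩, ha⟩, ?_⟩
  rintro ⟨x, hxS⟩ hx ⟨y, hyS⟩ hy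
  exact Reachable.induce hAS hx hy (hreach x hx y hy)

lemma twoNC_induce (hcard : 2 < S.ncard)
    (h : ∀ u, G.ConnectedOn (S \ {u}) Set.univ) : (G.induce S).TwoNC := by
  refine ⟨hcard, fun u => ?_⟩
  have hpre : Subtype.val ⁻¹' (S \ {u.1}) = ({u}ᶜ : Set (G.induce S).V) := by
    ext x
    exact and_iff_right_of_imp (fun _ => x.2) |>.trans (not_congr Subtype.ext_iff.symm)
  exact hpre ▸ (h u.1).induce Set.sdiff_subset

section Contract

variable {R : G.V → G.V → Prop}

variable (R) in
abbrev toContract (x : G.V) : (G.contract R).V := Quotient.mk _ x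

lemma Reachable.contract (h : G.Reachable A Set.univ x y) :
    (G.contract R).Reachable (toContract R '' A) Set.univ (toContract R x) (toContract R y) := by
  induction h with
  | refl => exact .refl
  | tail _ hadj ih =>
    rename_i b c _
    obtain ⟨hb, hc, e, -, hends⟩ := hadj
    by_cases hbc : toContract R b = toContract R c
    · exact hbc ▸ ih
    · refine ih.tail ⟨⟨b, hb, rfl⟩, ⟨c, hc, rfl⟩, ⟨e, ?_⟩, trivial, ?_⟩
      · rwa [hends, Sym2.map_mk, Sym2.mk_isDiag_iff]
      · exact (congrArg (Sym2.map _) hends).trans (Sym2.map_mk _ _ _)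

lemma ConnectedOn.contract (h : G.ConnectedOn A Set.univ) :
    (G.contract R).ConnectedOn (toContract R '' A) Set.univ := by
  obtain ⟨hne, hreach⟩ := h
  refine ⟨hne.image _, ?_⟩
  rintro _ ⟨x, hx, rfl⟩ _ ⟨y, hy, rfl⟩
  exact (hreach x hx y hy).contract

lemma toContract_eq_toContract_iff {P : Set G.V} (hR : ∀ x y, R x y → x ∈ P ∧ y ∈ P)
    (hP : ∀ x ∈ P, ∀ y ∈ P, Relation.EqvGen R x y) :
    toContract R x = toContract R y ↔ x = y ∨ x ∈ P ∧ y ∈ P := by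
  have hclass : ∀ {a b}, Relation.EqvGen R a b → a = b ∨ a ∈ P ∧ b ∈ P := by
    intro a b hab
    induction hab with
    | rel a b hab => exact .inr (hR a b hab)
    | refl => exact .inl rfl
    | symm a b _ ih => exact ih.imp Eq.symm And.symm
    | trans a b c _ _ ih₁ ih₂ =>
      rcases ih₁ with rfl | ⟨ha, hb⟩
      · exact ih₂
      · rcases ih₂ with rfl | ⟨-, hc⟩
        exacts [.inr ⟨ha, hb⟩, .inr ⟨ha, hc⟩]
  refine ⟨fun h => hclass (Quotient.exact h), ?_⟩
  rintro (rfl | ⟨hx, hy⟩)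
  exacts [rfl, Quotient.sound (hP x hx y hy)]

lemma TwoNC.contract {P : Set G.V} (hG : G.TwoNC) (hR : ∀ x y, R x y → x ∈ P ∧ y ∈ P)
    (hP : ∀ x ∈ P, ∀ y ∈ P, Relation.EqvGen R x y) (hPne : P.Nonempty)
    (hPc : G.ConnectedOn Pᶜ Set.univ) (hcard : 1 < Pᶜ.ncard) : (G.contract R).TwoNC := by
  have hmk := fun {x y : G.V} => toContract_eq_toContract_iff (x := x) (y := y) hR hP
  have := G.finV
  have := (G.contract R).finV
  obtain ⟨p, hp⟩ := hPne
  obtain ⟨a, b, ha, hb, hab⟩ := (Set.one_lt_ncard_iff (Set.toFinite _)).mp hcard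
  refine ⟨?_, fun z => ?_⟩
  · rw [← Set.ncard_univ, Set.two_lt_ncard_iff]
    refine ⟨toContract R a, toContract R b, toContract R p, trivial, trivial, trivial,
      ?_, ?_, ?_⟩ <;> simp only [ne_eq, hmk, not_or, not_and] <;> grind
  obtain ⟨z, rfl⟩ : ∃ z', toContract R z' = z := Quotient.exists_rep z
  by_cases hz : z ∈ P
  · convert hPc.contract (R := R) using 1
    ext q
    obtain ⟨q, rfl⟩ : ∃ q', toContract R q' = q := Quotient.exists_rep q
    simp only [Set.mem_compl_iff, Set.mem_singleton_iff, hmk, Set.mem_image]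
    grind
  · convert (hG.2 z).contract (R := R) using 1
    ext q
    obtain ⟨q, rfl⟩ : ∃ q', toContract R q' = q := Quotient.exists_rep q
    simp only [Set.mem_compl_iff, Set.mem_singleton_iff, hmk, Set.mem_image]
    grind

end Contract

variable {v w : G.V} {C : Set G.V}

lemma IsCompOf.two_lt_ncard_union_pair (hC : G.IsCompOf ({v, w} : Set G.V)ᶜ Set.univ C)
    (hvw : v ≠ w) : 2 < (C ∪ {v, w}).ncard := by
  have := G.finV
  rw [Set.ncard_union_eq (Set.disjoint_left.mpr fun _ hx => hC.1 hx), Set.ncard_pair hvw]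
  have := (Set.ncard_pos (Set.toFinite C)).mpr hC.2.1
  omega

lemma IsCompOf.twoNC_bpUp_contract (hC : G.IsCompOf ({v, w} : Set G.V)ᶜ Set.univ C)
    (hUp : (G.bpUp v w C).TwoNC) (hC2 : 2 ≤ C.ncard) :
    ((G.bpUp v w C).contract (fun x y => x.1 = v ∧ y.1 = w)).TwoNC := by
  unfold bpUp at *
  set P : Set (G.induce (C ∪ {v, w})).V := Subtype.val ⁻¹' {v, w}
  have hPc : Pᶜ = Subtype.val ⁻¹' C := by
    ext x
    exact ⟨fun hx => x.2.resolve_right hx, fun hx => hC.1 hx⟩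
  refine hUp.contract (P := P) (fun x y ⟨hx, hy⟩ => ⟨.inl hx, .inr hy⟩) ?_
    ⟨⟨v, .inr (.inl rfl)⟩, .inl rfl⟩ ?_ ?_
  · rintro x (hx | hx) y (hy | hy)
    · exact (Subtype.ext (hx.trans hy.symm) : x = y) ▸ .refl x
    · exact .rel _ _ ⟨hx, hy⟩
    · exact .symm _ _ (.rel _ _ ⟨hy, hx⟩)
    · exact (Subtype.ext (hx.trans hy.symm) : x = y) ▸ .refl x
  · exact hPc ▸ hC.2.2.1.induce Set.subset_union_left
  · have hCS : C ⊆ Set.range (Subtype.val : (C ∪ {v, w} : Set G.V) → G.V) := by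
      rw [Subtype.range_coe]
      exact Set.subset_union_left
    rw [hPc]
    change 1 < (Subtype.val ⁻¹' C : Set (C ∪ {v, w} : Set G.V)).ncard
    rwa [Set.ncard_preimage_of_injective_subset_range Subtype.val_injective hCS]

end CostGraph

theorem bpUp_bpContr_twoNC_general (G : CostGraph) (h2nc : G.TwoNC) (v w : G.V) (hbp : G.IsBadPair v w)
    (C : Set G.V) (hC : G.IsCompOf (({v, w} : Set G.V)ᶜ) Set.univ C) :
    (G.bpUp v w C).TwoNC ∧ (G.bpContr v w C).TwoNC := by
  obtain ⟨⟨e, -, he⟩, -⟩ := hbp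
  have hUp : (G.bpUp v w C).TwoNC :=
    CostGraph.twoNC_induce (hC.two_lt_ncard_union_pair (G.ne_of_ends_eq he))
      fun u => hC.connectedOn_union_pair_diff he (h2nc.2 u)
  refine ⟨hUp, ?_⟩
  unfold CostGraph.bpContr
  split_ifs with hC2
  · exact hC.twoNC_bpUp_contract hUp hC2
  · exact hUp

/-- Let `G` be a 2-node-connected MAP instance with no
`{0,1}`-edge-pairs, `{v,w}` a bad-pair of `G`, and `C` a bp-component of `{v,w}`.
Then both `C^{v,w}` and `C^⊘` are 2-node-connected. -/
theorem bpUp_bpContr_twoNC (G : CostGraph) (hG : G.IsMAP) (h2nc : G.TwoNC)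
    (h01 : G.NoZeroOnePair) (v w : G.V) (hbp : G.IsBadPair v w)
    (C : Set G.V) (hC : G.IsCompOf (({v, w} : Set G.V)ᶜ) Set.univ C) :
    (G.bpUp v w C).TwoNC ∧ (G.bpContr v w C).TwoNC :=
  bpUp_bpContr_twoNC_general G h2nc v w hbp C hC
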